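/- arXiv:2105.10725 — 2 statements merged into one kernel-verified Lean document; each statement's English description precedes it below -/
import Mathlib

section
/- For all integers 2 ≤ k ≤ n, the function λ ↦ cot(𝒫_{k,n}(λ)) is concave on Γ: for all λ, μ ∈ Γ and s ∈ [0,1], cot(𝒫_{k,n}(s λ + (1−s) μ)) ≥ s · cot(𝒫_{k,n}(λ)) + (1−s) · cot(𝒫_{k,n}(μ)). Moreover, on Γ one has cot(𝒫_{k,n}(λ)) = min over subsets I ⊆ {1,…,n} with |I| = k−1 of cot(Σ_{i∈I} arccot(λᵢ)). -/
/-!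
The maximum defining `Pfun` is attained and `cot` decreases on `(0, π)`, so `cot (Pfun n k λ)` is
the minimum of `cot (∑_{i ∈ I} arccot λᵢ)` over `|I| = k - 1`. Concavity then reduces to that of
`f ↦ cot (∑_{i ∈ I} arccot fᵢ)` on `{∑_{i ∈ I} arccot fᵢ < π}` for one fixed nonempty `I` (the
maximizing set of the convex combination). This goes by induction on `I`: for `θ ∈ (0, π)` one has
`θ + arccot x < π` iff `0 < cot θ + x`, and then `cot (θ + arccot x) = (x cot θ - 1) / (x + cot θ)`;
the map `(a, b) ↦ (ab - 1) / (a + b)` is concave and increasing in each variable on the half-plane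
`a + b > 0`.
-/

open Real

/-- `arccot x = π/2 - arctan x`, a strictly decreasing bijection from `ℝ` onto `(0, π)`. -/
noncomputable def arccot (x : ℝ) : ℝ := π / 2 - Real.arctan x

/-- `𝒫_{k,n}(λ)`: the maximum over subsets `I ⊆ {1,…,n}` with `|I| = k-1` of
`∑_{i ∈ I} arccot (λ i)`. -/
noncomputable def Pfun (n k : ℕ) (lam : Fin n → ℝ) : ℝ :=
  sSup {x : ℝ | ∃ s : Finset (Fin n), s.card = k - 1 ∧ x = ∑ i ∈ s, arccot (lam i)}

open Set Finset

lemma arccot_pos (x : ℝ) : 0 < arccot x := by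
  have := arctan_lt_pi_div_two x
  unfold arccot; linarith

lemma arccot_lt_pi (x : ℝ) : arccot x < π := by
  have := neg_pi_div_two_lt_arctan x
  unfold arccot; linarith

lemma arccot_strictAnti : StrictAnti arccot := fun _ _ h => by
  have := arctan_strictMono h
  unfold arccot; linarith

lemma cot_arccot (x : ℝ) : cot (arccot x) = x := by
  rw [arccot, cot_eq_cos_div_sin, cos_pi_div_two_sub, sin_pi_div_two_sub, ← tan_eq_sin_div_cos,
    tan_arctan]

lemma arccot_cot {y : ℝ} (hy : y ∈ Ioo 0 π) : arccot (cot y) = y := by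
  have hcot : cot y = tan (π / 2 - y) := by
    rw [cot_eq_cos_div_sin, tan_eq_sin_div_cos, sin_pi_div_two_sub, cos_pi_div_two_sub]
  rw [arccot, hcot, arctan_tan (by linarith [hy.2]) (by linarith [hy.1])]
  ring

lemma cot_strictAntiOn : StrictAntiOn cot (Ioo 0 π) := fun x hx y hy hxy => by
  rw [← arccot_cot hx, ← arccot_cot hy] at hxy
  exact arccot_strictAnti.lt_iff_gt.mp hxy

lemma cot_pi_sub (x : ℝ) : cot (π - x) = -cot x := by
  rw [cot_eq_cos_div_sin, cot_eq_cos_div_sin, cos_pi_sub, sin_pi_sub, neg_div]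

lemma cot_add_of_sin_ne_zero {x y : ℝ} (hx : sin x ≠ 0) (hy : sin y ≠ 0) :
    cot (x + y) = (cot x * cot y - 1) / (cot x + cot y) := by
  have hxy : sin x * sin y ≠ 0 := mul_ne_zero hx hy
  rw [cot_eq_cos_div_sin, cot_eq_cos_div_sin, cot_eq_cos_div_sin, sin_add, cos_add,
    ← div_div_div_cancel_right₀ hxy, add_comm (sin x * cos y)]
  congr 1 <;> field_simp

/-- `cot (x + y) = cotAdd (cot x) (cot y)`. -/
noncomputable def cotAdd (a b : ℝ) : ℝ := (a * b - 1) / (a + b)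

lemma cotAdd_comm (a b : ℝ) : cotAdd a b = cotAdd b a := by
  rw [cotAdd, cotAdd, mul_comm, add_comm]

lemma cotAdd_le_cotAdd_left {a a' b : ℝ} (h : a ≤ a') (hab : 0 < a + b) :
    cotAdd a b ≤ cotAdd a' b := by
  rw [cotAdd, cotAdd, div_le_div_iff₀ hab (by linarith)]
  nlinarith [mul_nonneg (sub_nonneg.2 h) (by positivity : (0 : ℝ) ≤ b ^ 2 + 1)]

lemma cotAdd_le_cotAdd_right {a b b' : ℝ} (h : b ≤ b') (hab : 0 < a + b) :
    cotAdd a b ≤ cotAdd a b' := by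
  rw [cotAdd_comm a, cotAdd_comm a]
  exact cotAdd_le_cotAdd_left h (by linarith)

lemma convex_halfPlane : Convex ℝ {p : ℝ × ℝ | 0 < p.1 + p.2} :=
  convex_halfSpace_gt (LinearMap.fst ℝ ℝ ℝ + LinearMap.snd ℝ ℝ ℝ).isLinear 0

/-- `cotAdd a b = (a + b) / 4 - ((a - b) ^ 2 + 4) / (4 * (a + b))`, and `(u, v) ↦ (v ^ 2 + 4) / u`
is convex for `u > 0`. -/
lemma concaveOn_cotAdd :
    ConcaveOn ℝ {p : ℝ × ℝ | 0 < p.1 + p.2} (fun p => cotAdd p.1 p.2) := by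
  refine ⟨convex_halfPlane, ?_⟩
  rintro ⟨a₁, b₁⟩ (h₁ : 0 < a₁ + b₁) ⟨a₂, b₂⟩ (h₂ : 0 < a₂ + b₂) s t hs ht hst
  obtain rfl : t = 1 - s := by linarith
  have hD : 0 < (s * a₁ + (1 - s) * a₂) + (s * b₁ + (1 - s) * b₂) := by
    simpa using convex_halfPlane (x := (a₁, b₁)) (y := (a₂, b₂)) h₁ h₂ hs ht hst
  simp only [Prod.smul_mk, Prod.mk_add_mk, smul_eq_mul, cotAdd]
  rw [mul_div_assoc', mul_div_assoc', div_add_div _ _ h₁.ne' h₂.ne',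
    div_le_div_iff₀ (by positivity) hD]
  have hst₀ : 0 ≤ s * (1 - s) := mul_nonneg hs ht
  nlinarith [mul_nonneg hst₀ (sq_nonneg ((a₁ - b₁) * (a₂ + b₂) - (a₂ - b₂) * (a₁ + b₁))),
    mul_nonneg hst₀ (sq_nonneg ((a₁ + b₁) - (a₂ + b₂)))]

theorem ConcaveOn.cotAdd {E : Type*} [AddCommGroup E] [Module ℝ E] {s : Set E} {φ ψ : E → ℝ}
    (hφ : ConcaveOn ℝ s φ) (hψ : ConcaveOn ℝ s ψ) :
    ConcaveOn ℝ {x ∈ s | 0 < φ x + ψ x} (fun x => _root_.cotAdd (φ x) (ψ x)) := by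
  refine ⟨(hφ.add hψ).convex_gt 0, ?_⟩
  rintro x ⟨hx, hxpos⟩ y ⟨hy, hypos⟩ a b ha hb hab
  have hφz := hφ.2 hx hy ha hb hab
  have hψz := hψ.2 hx hy ha hb hab
  simp only [smul_eq_mul] at hφz hψz ⊢
  have hmix : 0 < (a * φ x + b * φ y) + (a * ψ x + b * ψ y) := by
    simpa using convex_halfPlane (x := (φ x, ψ x)) (y := (φ y, ψ y)) hxpos hypos ha hb hab
  calc a * _root_.cotAdd (φ x) (ψ x) + b * _root_.cotAdd (φ y) (ψ y)
      ≤ _root_.cotAdd (a * φ x + b * φ y) (a * ψ x + b * ψ y) := by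
        simpa using concaveOn_cotAdd.2 (x := (φ x, ψ x)) (y := (φ y, ψ y)) hxpos hypos ha hb hab
    _ ≤ _root_.cotAdd (φ (a • x + b • y)) (a * ψ x + b * ψ y) :=
        cotAdd_le_cotAdd_left hφz hmix
    _ ≤ _root_.cotAdd (φ (a • x + b • y)) (ψ (a • x + b • y)) :=
        cotAdd_le_cotAdd_right hψz (by linarith)

lemma add_arccot_lt_pi_iff {θ x : ℝ} (hθ : θ ∈ Ioo 0 π) :
    θ + arccot x < π ↔ 0 < cot θ + x := by
  have h : arccot (-cot θ) = π - θ := by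
    rw [← cot_pi_sub, arccot_cot ⟨by linarith [hθ.2], by linarith [hθ.1]⟩]
  rw [← lt_sub_iff_add_lt', ← h, arccot_strictAnti.lt_iff_gt, neg_lt_iff_pos_add']

lemma cot_add_arccot {θ : ℝ} (hθ : θ ∈ Ioo 0 π) (x : ℝ) :
    cot (θ + arccot x) = cotAdd (cot θ) x := by
  rw [cot_add_of_sin_ne_zero (sin_pos_of_pos_of_lt_pi hθ.1 hθ.2).ne'
    (sin_pos_of_pos_of_lt_pi (arccot_pos x) (arccot_lt_pi x)).ne', cot_arccot, cotAdd]

lemma sum_arccot_pos {ι : Type*} {I : Finset ι} (hI : I.Nonempty) (f : ι → ℝ) :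
    0 < ∑ i ∈ I, arccot (f i) :=
  Finset.sum_pos (fun i _ => arccot_pos (f i)) hI

lemma concaveOn_cot_sum_arccot {ι : Type*} {I : Finset ι} (hI : I.Nonempty) :
    ConcaveOn ℝ {f : ι → ℝ | ∑ i ∈ I, arccot (f i) < π}
      (fun f => cot (∑ i ∈ I, arccot (f i))) := by
  induction hI using Finset.Nonempty.cons_induction with
  | singleton a =>
    simp only [Finset.sum_singleton, cot_arccot, arccot_lt_pi, ofPred_true]
    exact (LinearMap.proj a).concaveOn convex_univ
  | cons a I ha hI ih =>
    have hset : {f : ι → ℝ | ∑ i ∈ I.cons a ha, arccot (f i) < π} =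
        {f ∈ {f : ι → ℝ | ∑ i ∈ I, arccot (f i) < π} | 0 < cot (∑ i ∈ I, arccot (f i)) + f a} := by
      ext f
      simp only [Finset.sum_cons, mem_ofPred_eq]
      constructor
      · intro hf
        have hlt : ∑ i ∈ I, arccot (f i) < π := by linarith [arccot_pos (f a)]
        exact ⟨hlt, (add_arccot_lt_pi_iff ⟨sum_arccot_pos hI f, hlt⟩).1 (by linarith)⟩
      · rintro ⟨hlt, hpos⟩
        linarith [(add_arccot_lt_pi_iff ⟨sum_arccot_pos hI f, hlt⟩).2 hpos]
    rw [hset]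
    have heval : ConcaveOn ℝ {f : ι → ℝ | ∑ i ∈ I, arccot (f i) < π} (fun f => f a) :=
      ((LinearMap.proj a).concaveOn convex_univ).subset (subset_univ _) ih.1
    refine (ih.cotAdd heval).congr ?_
    rintro f ⟨hf, -⟩
    simp only [Finset.sum_cons]
    rw [add_comm, cot_add_arccot ⟨sum_arccot_pos hI f, hf⟩]

lemma finite_setOf_sum_arccot (n k : ℕ) (lam : Fin n → ℝ) :
    {x : ℝ | ∃ t : Finset (Fin n), t.card = k - 1 ∧ x = ∑ i ∈ t, arccot (lam i)}.Finite :=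
  (finite_range fun t : Finset (Fin n) => ∑ i ∈ t, arccot (lam i)).subset
    fun _ ⟨t, _, hx⟩ => ⟨t, hx.symm⟩

lemma exists_eq_Pfun {n k : ℕ} (hkn : k ≤ n) (lam : Fin n → ℝ) :
    ∃ t : Finset (Fin n), t.card = k - 1 ∧ Pfun n k lam = ∑ i ∈ t, arccot (lam i) := by
  obtain ⟨t, -, ht⟩ := Finset.exists_subset_card_eq (s := (univ : Finset (Fin n))) (n := k - 1)
    (by rw [card_univ, Fintype.card_fin]; omega)
  exact Set.Nonempty.csSup_mem (by exact ⟨_, t, ht, rfl⟩) (finite_setOf_sum_arccot n k lam)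

lemma sum_arccot_le_Pfun {n k : ℕ} (lam : Fin n → ℝ) {t : Finset (Fin n)}
    (ht : t.card = k - 1) :
    ∑ i ∈ t, arccot (lam i) ≤ Pfun n k lam :=
  le_csSup (finite_setOf_sum_arccot n k lam).bddAbove (by exact ⟨t, ht, rfl⟩)

lemma sum_arccot_mem_Ioo {n k : ℕ} (hk : 2 ≤ k) {lam : Fin n → ℝ}
    (hlam : ∑ i, arccot (lam i) < π) {t : Finset (Fin n)} (ht : t.card = k - 1) :
    ∑ i ∈ t, arccot (lam i) ∈ Ioo 0 π :=
  ⟨sum_arccot_pos (card_pos.1 (by omega)) lam,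
    (sum_le_sum_of_subset_of_nonneg (subset_univ t) fun i _ _ =>
      (arccot_pos (lam i)).le).trans_lt hlam⟩

lemma cot_Pfun_le_cot_sum_arccot {n k : ℕ} (hk : 2 ≤ k) (hkn : k ≤ n) {lam : Fin n → ℝ}
    (hlam : ∑ i, arccot (lam i) < π) {t : Finset (Fin n)} (ht : t.card = k - 1) :
    cot (Pfun n k lam) ≤ cot (∑ i ∈ t, arccot (lam i)) := by
  obtain ⟨t₀, ht₀, hP⟩ := exists_eq_Pfun hkn lam
  exact cot_strictAntiOn.antitoneOn (sum_arccot_mem_Ioo hk hlam ht)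
    (hP ▸ sum_arccot_mem_Ioo hk hlam ht₀) (sum_arccot_le_Pfun lam ht)

theorem cot_Pfun_concave_and_min (n k : ℕ) (hk : 2 ≤ k) (hkn : k ≤ n)
    (lam mu : Fin n → ℝ)
    (hlam : (∑ i, arccot (lam i)) < π) (hmu : (∑ i, arccot (mu i)) < π)
    (s : ℝ) (hs0 : 0 ≤ s) (hs1 : s ≤ 1) :
    s * Real.cot (Pfun n k lam) + (1 - s) * Real.cot (Pfun n k mu) ≤
      Real.cot (Pfun n k (s • lam + (1 - s) • mu)) ∧
    Real.cot (Pfun n k lam) =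
      sInf {x : ℝ | ∃ t : Finset (Fin n), t.card = k - 1 ∧
        x = Real.cot (∑ i ∈ t, arccot (lam i))} := by
  have hs1' : 0 ≤ 1 - s := by linarith
  obtain ⟨t, ht, hPt⟩ := exists_eq_Pfun hkn (s • lam + (1 - s) • mu)
  constructor
  · calc s * cot (Pfun n k lam) + (1 - s) * cot (Pfun n k mu)
        ≤ s * cot (∑ i ∈ t, arccot (lam i)) + (1 - s) * cot (∑ i ∈ t, arccot (mu i)) := by
          gcongr
          · exact cot_Pfun_le_cot_sum_arccot hk hkn hlam ht
          · exact cot_Pfun_le_cot_sum_arccot hk hkn hmu ht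
      _ ≤ cot (∑ i ∈ t, arccot ((s • lam + (1 - s) • mu) i)) :=
          (concaveOn_cot_sum_arccot (card_pos.1 (by omega))).2
            (sum_arccot_mem_Ioo hk hlam ht).2 (sum_arccot_mem_Ioo hk hmu ht).2 hs0 hs1' (by ring)
      _ = cot (Pfun n k (s • lam + (1 - s) • mu)) := by rw [hPt]
  · obtain ⟨tl, htl, hPl⟩ := exists_eq_Pfun hkn lam
    refine (IsLeast.csInf_eq ⟨by exact ⟨tl, htl, by rw [hPl]⟩, ?_⟩).symm
    rintro _ ⟨t, ht, rfl⟩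
    exact cot_Pfun_le_cot_sum_arccot hk hkn hlam ht
end

section
/- Let 1 ≤ k ≤ n and let B be an n×n complex Hermitian matrix with B ∈ Γ_I. Then 𝒬_k(B) equals the maximum, over all n×k complex matrices K satisfying KᴴK = I_k and such that KᴴBK is a diagonal matrix diag(λ''₁, …, λ''_k), of Σ_{i=1}^{k} arccot(λ''ᵢ). That is: every such K satisfies Σ_{i=1}^{k} arccot(λ''ᵢ) ≤ 𝒬_k(B), and there exists such a K achieving equality. -/
open Real Matrix

/-- `𝒬_{k,n}(λ)`: the maximum over subsets `J ⊆ {1,…,n}` with `|J| = k` of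
`∑_{j ∈ J} arccot (λ j)`. -/
noncomputable def Qfun (n k : ℕ) (lam : Fin n → ℝ) : ℝ :=
  sSup {x : ℝ | ∃ s : Finset (Fin n), s.card = k ∧ x = ∑ i ∈ s, arccot (lam i)}

/-!
Cauchy interlacing: if `K` has orthonormal columns and `Kᴴ B K = diag d`, then the `i`-th smallest
`d` is at least the `i`-th smallest eigenvalue of `B`. Indeed, some nonzero vector `v` in the span of
the `i + 1` columns of `K` with the smallest `d` is orthogonal to the `i` eigenvectors of `B` with
the smallest eigenvalues; its Rayleigh quotient `vᴴ B v` is then at most the `i`-th smallest `d`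
and at least the `i`-th smallest eigenvalue. As `arccot` is decreasing, `∑ arccot dᵢ` is at most
the sum of `arccot` over the `k` smallest eigenvalues, one of the sums defining `𝒬_k(B)`.
Equality is attained by the eigenvectors of `B` indexed by a maximizing subset.
-/

open Finset

theorem Matrix.exists_ne_zero_supported_mulVec_eq_zero_on {F m n : Type*} [Field F] [Fintype m]
    [Fintype n] [DecidableEq n] (M : Matrix m n F) {T : Finset n} {J : Finset m} (h : #J < #T) :
    ∃ v : n → F, v ≠ 0 ∧ (∀ a, v a ≠ 0 → a ∈ T) ∧ ∀ j ∈ J, (M *ᵥ v) j = 0 := by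
  obtain ⟨w, hw, hw0⟩ := Submodule.exists_mem_ne_zero_of_ne_bot
    (LinearMap.ker_ne_bot_of_finrank_lt (f := (M.submatrix ((↑) : J → m) ((↑) : T → n)).mulVecLin)
      (by simpa using h))
  refine ⟨fun a => if h : a ∈ T then w ⟨a, h⟩ else 0, ?_, ?_, ?_⟩
  · refine fun hv => hw0 (funext fun t => ?_)
    simpa using congrFun hv t
  · intro a ha
    by_contra hT
    simp [hT] at ha
  · intro j hj
    have := congrFun (LinearMap.mem_ker.mp hw) ⟨j, hj⟩
    rw [mulVec, dotProduct, ← sum_subset (subset_univ T) fun a _ ha => by simp [ha],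
      ← sum_coe_sort T]
    simpa [mulVec, dotProduct] using this

variable {𝕜 : Type*} [RCLike 𝕜] {m n : Type*} [Fintype m] [Fintype n]

theorem Matrix.star_dotProduct_diagonal_mulVec [DecidableEq n] (d : n → ℝ) (v : n → 𝕜) :
    star v ⬝ᵥ (diagonal (fun a => (d a : 𝕜)) *ᵥ v) = ((∑ a, d a * ‖v a‖ ^ 2 : ℝ) : 𝕜) := by
  simp only [dotProduct, mulVec_diagonal, Pi.star_apply, RCLike.star_def]
  push_cast
  refine sum_congr rfl fun a _ => ?_
  rw [← RCLike.conj_mul]; ring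

theorem Matrix.star_dotProduct_self_eq_sum (v : n → 𝕜) :
    star v ⬝ᵥ v = ((∑ a, ‖v a‖ ^ 2 : ℝ) : 𝕜) := by
  simp only [dotProduct, Pi.star_apply, RCLike.star_def]
  push_cast
  exact sum_congr rfl fun a _ => RCLike.conj_mul _

theorem Matrix.star_dotProduct_conjTranspose_mul_mul_mulVec (A : Matrix m n 𝕜)
    (M : Matrix m m 𝕜) (v : n → 𝕜) :
    star v ⬝ᵥ ((Aᴴ * M * A) *ᵥ v) = star (A *ᵥ v) ⬝ᵥ (M *ᵥ (A *ᵥ v)) := by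
  rw [← mulVec_mulVec, ← mulVec_mulVec, dotProduct_mulVec, star_mulVec]

theorem Matrix.star_mulVec_dotProduct_mulVec_of_conjTranspose_mul_self [DecidableEq n]
    {A : Matrix m n 𝕜} (hA : Aᴴ * A = 1) (v : n → 𝕜) :
    star (A *ᵥ v) ⬝ᵥ (A *ᵥ v) = star v ⬝ᵥ v := by
  rw [star_mulVec, ← dotProduct_mulVec, mulVec_mulVec, hA, one_mulVec]

theorem Matrix.IsHermitian.star_dotProduct_mulVec_eq_sum [DecidableEq n] {B : Matrix n n 𝕜}
    (hB : B.IsHermitian) (x : n → 𝕜) :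
    star x ⬝ᵥ (B *ᵥ x) = ((∑ j, hB.eigenvalues j *
      ‖(star (hB.eigenvectorUnitary : Matrix n n 𝕜) *ᵥ x) j‖ ^ 2 : ℝ) : 𝕜) := by
  set U : Matrix n n 𝕜 := (hB.eigenvectorUnitary : Matrix n n 𝕜)
  have hBU : B = (star U)ᴴ * diagonal (fun j => (hB.eigenvalues j : 𝕜)) * star U := by
    conv_lhs => rw [hB.spectral_theorem]
    simp [U, star_eq_conjTranspose, Function.comp_def]
  conv_lhs => rw [hBU]
  rw [star_dotProduct_conjTranspose_mul_mul_mulVec, star_dotProduct_diagonal_mulVec]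

theorem sum_mul_norm_sq_le {ι : Type*} (s : Finset ι) (d : ι → ℝ) (v : ι → 𝕜) {μ : ℝ}
    (h : ∀ a ∈ s, v a ≠ 0 → d a ≤ μ) : ∑ a ∈ s, d a * ‖v a‖ ^ 2 ≤ μ * ∑ a ∈ s, ‖v a‖ ^ 2 := by
  rw [mul_sum]
  refine sum_le_sum fun a ha => ?_
  by_cases hv : v a = 0
  · simp [hv]
  · exact mul_le_mul_of_nonneg_right (h a ha hv) (by positivity)

theorem le_sum_mul_norm_sq {ι : Type*} (s : Finset ι) (d : ι → ℝ) (v : ι → 𝕜) {ν : ℝ}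
    (h : ∀ a ∈ s, v a ≠ 0 → ν ≤ d a) : ν * ∑ a ∈ s, ‖v a‖ ^ 2 ≤ ∑ a ∈ s, d a * ‖v a‖ ^ 2 := by
  rw [mul_sum]
  refine sum_le_sum fun a ha => ?_
  by_cases hv : v a = 0
  · simp [hv]
  · exact mul_le_mul_of_nonneg_right (h a ha hv) (by positivity)

theorem Matrix.IsHermitian.le_of_conjTranspose_mul_mul_eq_diagonal [DecidableEq m]
    [DecidableEq n] {B : Matrix n n 𝕜} (hB : B.IsHermitian) {K : Matrix n m 𝕜} {d : m → ℝ}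
    (hK : Kᴴ * K = 1) (hKBK : Kᴴ * B * K = diagonal (fun a => (d a : 𝕜)))
    {T : Finset m} {J : Finset n} (hJT : #J < #T) {μ ν : ℝ} (hμ : ∀ a ∈ T, d a ≤ μ)
    (hν : ∀ j ∉ J, ν ≤ hB.eigenvalues j) : ν ≤ μ := by
  set U : Matrix n n 𝕜 := (hB.eigenvectorUnitary : Matrix n n 𝕜)
  obtain ⟨v, hv0, hvT, hvJ⟩ := (star U * K).exists_ne_zero_supported_mulVec_eq_zero_on hJT
  set y := star U *ᵥ (K *ᵥ v)
  have hy : y = (star U * K) *ᵥ v := mulVec_mulVec _ _ _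
  have hquad : ∑ a, d a * ‖v a‖ ^ 2 = ∑ j, hB.eigenvalues j * ‖y j‖ ^ 2 := by
    have := star_dotProduct_conjTranspose_mul_mul_mulVec K B v
    rw [hKBK, star_dotProduct_diagonal_mulVec, hB.star_dotProduct_mulVec_eq_sum] at this
    exact_mod_cast this
  have hnorm : ∑ a, ‖v a‖ ^ 2 = ∑ j, ‖y j‖ ^ 2 := by
    have hU : (star U)ᴴ * star U = 1 := by
      simp [U, ← star_eq_conjTranspose]
    have := (star_mulVec_dotProduct_mulVec_of_conjTranspose_mul_self hK v).symm.trans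
      (star_mulVec_dotProduct_mulVec_of_conjTranspose_mul_self hU (K *ᵥ v)).symm
    rw [star_dotProduct_self_eq_sum, star_dotProduct_self_eq_sum] at this
    exact_mod_cast this
  have hpos : 0 < ∑ a, ‖v a‖ ^ 2 := by
    obtain ⟨a, ha⟩ := Function.ne_iff.mp hv0
    exact sum_pos' (fun a _ => by positivity) ⟨a, mem_univ a, pow_pos (norm_pos_iff.mpr ha) 2⟩
  refine le_of_mul_le_mul_right ?_ hpos
  calc ν * ∑ a, ‖v a‖ ^ 2 = ν * ∑ j, ‖y j‖ ^ 2 := by rw [hnorm]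
    _ ≤ ∑ j, hB.eigenvalues j * ‖y j‖ ^ 2 :=
      le_sum_mul_norm_sq _ _ _ fun j _ hj => hν j fun hjJ => hj (hy ▸ hvJ j hjJ)
    _ = ∑ a, d a * ‖v a‖ ^ 2 := hquad.symm
    _ ≤ μ * ∑ a, ‖v a‖ ^ 2 := sum_mul_norm_sq_le _ _ _ fun a _ ha => hμ a (hvT a ha)

theorem Matrix.IsHermitian.eigenvalues_sort_le_sort {n k : ℕ} (hkn : k ≤ n)
    {B : Matrix (Fin n) (Fin n) 𝕜} (hB : B.IsHermitian) {K : Matrix (Fin n) (Fin k) 𝕜}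
    {d : Fin k → ℝ} (hK : Kᴴ * K = 1) (hKBK : Kᴴ * B * K = diagonal (fun a => (d a : 𝕜)))
    (i : Fin k) :
    hB.eigenvalues (Tuple.sort hB.eigenvalues (Fin.castLE hkn i)) ≤ d (Tuple.sort d i) := by
  refine hB.le_of_conjTranspose_mul_mul_eq_diagonal hK hKBK
    (T := (Iic i).map (Tuple.sort d).toEmbedding)
    (J := (Iio (Fin.castLE hkn i)).map (Tuple.sort hB.eigenvalues).toEmbedding)
    (by simp) (fun a ha => ?_) (fun j hj => ?_)
  · obtain ⟨t, ht, rfl⟩ := mem_map.mp ha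
    exact Tuple.monotone_sort d (mem_Iic.mp ht)
  · have : Fin.castLE hkn i ≤ (Tuple.sort hB.eigenvalues).symm j := by
      by_contra! hlt
      exact hj (mem_map.mpr
        ⟨(Tuple.sort hB.eigenvalues).symm j, mem_Iio.mpr hlt, Equiv.apply_symm_apply _ j⟩)
    simpa only [Function.comp_apply, Equiv.apply_symm_apply] using
      Tuple.monotone_sort hB.eigenvalues this

omit [Fintype n] in
theorem Matrix.conjTranspose_submatrix_mul_mul_submatrix {α l : Type*} [CommSemiring α]
    [StarRing α] (A : Matrix m n α) (M : Matrix m m α) (g : l → n) :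
    (A.submatrix id g)ᴴ * M * A.submatrix id g = (Aᴴ * M * A).submatrix g g := by
  rw [submatrix_mul _ _ _ id _ Function.bijective_id,
    submatrix_mul _ _ _ id _ Function.bijective_id, conjTranspose_submatrix, submatrix_id_id]

theorem Matrix.IsHermitian.exists_conjTranspose_mul_mul_eq_diagonal {l : Type*} [DecidableEq l]
    [DecidableEq n] {B : Matrix n n 𝕜} (hB : B.IsHermitian) (g : l ↪ n) :
    ∃ K : Matrix n l 𝕜, Kᴴ * K = 1 ∧
      Kᴴ * B * K = diagonal (fun i => (hB.eigenvalues (g i) : 𝕜)) := by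
  set U : Matrix n n 𝕜 := (hB.eigenvectorUnitary : Matrix n n 𝕜)
  have hUBU : Uᴴ * B * U = diagonal (fun j => (hB.eigenvalues j : 𝕜)) := by
    simpa [star_eq_conjTranspose, Function.comp_def] using hB.conjStarAlgAut_star_eigenvectorUnitary
  refine ⟨U.submatrix id g, ?_, ?_⟩
  · have : Uᴴ * U = 1 := by simp [U, ← star_eq_conjTranspose]
    rw [← Matrix.mul_one (U.submatrix id g)ᴴ, conjTranspose_submatrix_mul_mul_submatrix,
      Matrix.mul_one, this, submatrix_one_embedding]
  · rw [conjTranspose_submatrix_mul_mul_submatrix, hUBU, submatrix_diagonal_embedding]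
    rfl

theorem arccot_antitone : Antitone arccot := fun _ _ h => by
  unfold arccot
  linarith [Real.arctan_strictMono.monotone h]

theorem Qfun_set_finite (n k : ℕ) (lam : Fin n → ℝ) :
    {x : ℝ | ∃ s : Finset (Fin n), s.card = k ∧ x = ∑ i ∈ s, arccot (lam i)}.Finite :=
  (Set.finite_range fun s : Finset (Fin n) => ∑ i ∈ s, arccot (lam i)).subset
    fun _ ⟨s, _, hs⟩ => ⟨s, hs.symm⟩

theorem sum_arccot_comp_le_Qfun {n k : ℕ} (lam : Fin n → ℝ) (g : Fin k ↪ Fin n) :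
    ∑ i, arccot (lam (g i)) ≤ Qfun n k lam :=
  le_csSup (Qfun_set_finite n k lam).bddAbove ⟨univ.map g, by simp, by simp⟩

theorem exists_embedding_sum_arccot_eq_Qfun {n k : ℕ} (hkn : k ≤ n) (lam : Fin n → ℝ) :
    ∃ g : Fin k ↪ Fin n, ∑ i, arccot (lam (g i)) = Qfun n k lam := by
  obtain ⟨t, ht, hQ⟩ := Set.Nonempty.csSup_mem
    (by exact ⟨_, univ.map (Fin.castLEEmb hkn), by simp, rfl⟩) (Qfun_set_finite n k lam)
  refine ⟨(t.orderEmbOfFin ht).toEmbedding, ?_⟩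
  rw [Qfun, hQ]
  conv_rhs => rw [← map_orderEmbOfFin_univ t ht, sum_map]

theorem Matrix.IsHermitian.sum_arccot_le_Qfun {n k : ℕ} (hkn : k ≤ n)
    {B : Matrix (Fin n) (Fin n) 𝕜} (hB : B.IsHermitian) {K : Matrix (Fin n) (Fin k) 𝕜}
    {d : Fin k → ℝ} (hK : Kᴴ * K = 1) (hKBK : Kᴴ * B * K = diagonal (fun a => (d a : 𝕜))) :
    ∑ i, arccot (d i) ≤ Qfun n k hB.eigenvalues :=
  calc ∑ i, arccot (d i) = ∑ i, arccot (d (Tuple.sort d i)) := (Equiv.sum_comp _ _).symm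
    _ ≤ ∑ i, arccot (hB.eigenvalues (Tuple.sort hB.eigenvalues (Fin.castLE hkn i))) :=
      sum_le_sum fun i _ => arccot_antitone (hB.eigenvalues_sort_le_sort hkn hK hKBK i)
    _ ≤ Qfun n k hB.eigenvalues :=
      sum_arccot_comp_le_Qfun _ ((Fin.castLEEmb hkn).trans (Tuple.sort hB.eigenvalues).toEmbedding)

theorem Qfun_variational_general (n k : ℕ) (hkn : k ≤ n)
    (B : Matrix (Fin n) (Fin n) ℂ) (hB : B.IsHermitian) :
    (∀ (K : Matrix (Fin n) (Fin k) ℂ) (d : Fin k → ℝ),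
        Kᴴ * K = 1 → Kᴴ * B * K = Matrix.diagonal (fun i => (d i : ℂ)) →
        (∑ i, arccot (d i)) ≤ Qfun n k hB.eigenvalues) ∧
    (∃ (K : Matrix (Fin n) (Fin k) ℂ) (d : Fin k → ℝ),
        Kᴴ * K = 1 ∧ Kᴴ * B * K = Matrix.diagonal (fun i => (d i : ℂ)) ∧
        (∑ i, arccot (d i)) = Qfun n k hB.eigenvalues) := by
  refine ⟨fun K d hK hKBK => hB.sum_arccot_le_Qfun hkn hK hKBK, ?_⟩
  obtain ⟨g, hg⟩ := exists_embedding_sum_arccot_eq_Qfun hkn hB.eigenvalues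
  obtain ⟨K, hK, hKBK⟩ := hB.exists_conjTranspose_mul_mul_eq_diagonal g
  exact ⟨K, _, hK, hKBK, hg⟩

theorem Qfun_variational (n k : ℕ) (hk : 1 ≤ k) (hkn : k ≤ n)
    (B : Matrix (Fin n) (Fin n) ℂ) (hB : B.IsHermitian)
    (hΓ : (∑ i, arccot (hB.eigenvalues i)) < π) :
    (∀ (K : Matrix (Fin n) (Fin k) ℂ) (d : Fin k → ℝ),
        Kᴴ * K = 1 → Kᴴ * B * K = Matrix.diagonal (fun i => (d i : ℂ)) →
        (∑ i, arccot (d i)) ≤ Qfun n k hB.eigenvalues) ∧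
    (∃ (K : Matrix (Fin n) (Fin k) ℂ) (d : Fin k → ℝ),
        Kᴴ * K = 1 ∧ Kᴴ * B * K = Matrix.diagonal (fun i => (d i : ℂ)) ∧
        (∑ i, arccot (d i)) = Qfun n k hB.eigenvalues) :=
  Qfun_variational_general n k hkn B hB
end
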